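/- arXiv:2008.13491 — 3 statements merged into one kernel-verified Lean document; each statement's English description precedes it below -/
import Mathlib

section
/- Let G be a GP4-graph constructed from a connected graph H with n vertices. The set S = {w_i, y_i : 1 ≤ i ≤ n} is a semipaired dominating set of G of size 2n; hence γ_{pr2}(G) ≤ (2/5)|V(G)|. -/
open SimpleGraph Finset

/-- `D` is a dominating set of `G`. -/
def Dominating {V : Type*} (G : SimpleGraph V) (D : Finset V) : Prop :=
  ∀ v : V, ∃ u ∈ D, u = v ∨ G.Adj u v

/-- `D` is a semipaired dominating set of `G`: a dominating set whose vertices can be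
partitioned into pairs (via a fixed-point-free involution) at distance at most 2. -/
def SemiPairedDom {V : Type*} (G : SimpleGraph V) (D : Finset V) : Prop :=
  Dominating G D ∧ ∃ f : V → V,
    (∀ u ∈ D, f u ∈ D) ∧ (∀ u ∈ D, f (f u) = u) ∧ (∀ u ∈ D, f u ≠ u) ∧
    (∀ u ∈ D, G.Adj u (f u) ∨ ∃ w, G.Adj u w ∧ G.Adj w (f u))

/-- `D` is a paired dominating set of `G`: a dominating set whose induced subgraph has a
perfect matching (encoded by a fixed-point-free involution pairing adjacent vertices). -/
def PairedDom {V : Type*} (G : SimpleGraph V) (D : Finset V) : Prop :=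
  Dominating G D ∧ ∃ f : V → V,
    (∀ u ∈ D, f u ∈ D) ∧ (∀ u ∈ D, f (f u) = u) ∧ (∀ u ∈ D, f u ≠ u) ∧
    (∀ u ∈ D, G.Adj u (f u))

/-- The domination number. -/
noncomputable def domNum (V : Type*) [Fintype V] (G : SimpleGraph V) : ℕ :=
  sInf {k : ℕ | ∃ D : Finset V, Dominating G D ∧ D.card = k}

/-- The semipaired domination number. -/
noncomputable def semiPairedDomNum (V : Type*) [Fintype V] (G : SimpleGraph V) : ℕ :=
  sInf {k : ℕ | ∃ D : Finset V, SemiPairedDom G D ∧ D.card = k}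

/-- The paired domination number. -/
noncomputable def pairedDomNum (V : Type*) [Fintype V] (G : SimpleGraph V) : ℕ :=
  sInf {k : ℕ | ∃ D : Finset V, PairedDom G D ∧ D.card = k}

/-- The GP4-graph obtained from `H` by attaching to each vertex `a` a path
`a – w_a – x_a – y_a – z_a`, where `w_a, x_a, y_a, z_a` are the vertices
`Sum.inr (a, 0), …, Sum.inr (a, 3)`. -/
def GP4 {α : Type*} (H : SimpleGraph α) : SimpleGraph (α ⊕ α × Fin 4) :=
  SimpleGraph.fromRel (fun u v =>
    (∃ a b, u = Sum.inl a ∧ v = Sum.inl b ∧ H.Adj a b) ∨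
    (∃ a, u = Sum.inl a ∧ v = Sum.inr (a, 0)) ∨
    (∃ (a : α) (j k : Fin 4), u = Sum.inr (a, j) ∧ v = Sum.inr (a, k) ∧ (k : ℕ) = (j : ℕ) + 1))


theorem semiPairedDomNum_le_card {V : Type*} [Fintype V] {G : SimpleGraph V} {D : Finset V}
    (hD : SemiPairedDom G D) : semiPairedDomNum V G ≤ D.card :=
  Nat.sInf_le ⟨D, hD, rfl⟩

namespace GP4

variable {α : Type*} (H : SimpleGraph α)

theorem adj_inl_inr_zero (a : α) : (GP4 H).Adj (Sum.inl a) (Sum.inr (a, 0)) :=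
  ⟨by simp, Or.inl (Or.inr (Or.inl ⟨a, rfl, rfl⟩))⟩

theorem adj_inr_of_val_eq_succ (a : α) {j k : Fin 4} (hjk : (k : ℕ) = j + 1) :
    (GP4 H).Adj (Sum.inr (a, j)) (Sum.inr (a, k)) := by
  refine ⟨fun h => ?_, Or.inl (Or.inr (Or.inr ⟨a, j, k, rfl, rfl, hjk⟩))⟩
  have : j = k := by simpa using h
  omega

/-- Levels `0, 1, 2, 3` are the paper's `w_i, x_i, y_i, z_i`. -/
def legLevel (α : Type*) [Fintype α] [DecidableEq α] (j : Fin 4) : Finset (α ⊕ α × Fin 4) :=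
  univ.image fun a : α => Sum.inr (a, j)

variable [Fintype α] [DecidableEq α]

theorem inr_mem_legLevel (a : α) (j : Fin 4) : Sum.inr (a, j) ∈ legLevel α j :=
  mem_image_of_mem _ (mem_univ a)

theorem mem_legLevel {u : α ⊕ α × Fin 4} {j : Fin 4} :
    u ∈ legLevel α j ↔ ∃ a, u = Sum.inr (a, j) := by
  simp [legLevel, eq_comm]

theorem card_legLevel (j : Fin 4) : (legLevel α j).card = Fintype.card α :=
  card_image_of_injective _ fun a b h => by simpa using h

theorem disjoint_legLevel {i j : Fin 4} (hij : i ≠ j) :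
    Disjoint (legLevel α i) (legLevel α j) := by
  simp [legLevel, Finset.disjoint_left, hij.symm]

theorem card_legLevel_union {i j : Fin 4} (hij : i ≠ j) :
    (legLevel α i ∪ legLevel α j).card = 2 * Fintype.card α := by
  rw [card_union_of_disjoint (disjoint_legLevel hij), card_legLevel, card_legLevel, two_mul]

theorem dominating_legLevel_zero_union_two :
    Dominating (GP4 H) (legLevel α 0 ∪ legLevel α 2) := by
  have hw a : Sum.inr (a, 0) ∈ legLevel α 0 ∪ legLevel α 2 :=
    mem_union_left _ (inr_mem_legLevel a 0)
  have hy a : Sum.inr (a, 2) ∈ legLevel α 0 ∪ legLevel α 2 :=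
    mem_union_right _ (inr_mem_legLevel a 2)
  rintro (a | ⟨a, j⟩)
  · exact ⟨_, hw a, Or.inr (adj_inl_inr_zero H a).symm⟩
  · fin_cases j
    · exact ⟨_, hw a, Or.inl rfl⟩
    · exact ⟨_, hw a, Or.inr (adj_inr_of_val_eq_succ H a rfl)⟩
    · exact ⟨_, hy a, Or.inl rfl⟩
    · exact ⟨_, hy a, Or.inr (adj_inr_of_val_eq_succ H a rfl)⟩

/-- `w_a` and `y_a` are paired; they are at distance 2 through `x_a`. -/
theorem semiPairedDom_legLevel_zero_union_two :
    SemiPairedDom (GP4 H) (legLevel α 0 ∪ legLevel α 2) := by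
  let σ : α ⊕ α × Fin 4 → α ⊕ α × Fin 4 := Sum.map id (Prod.map id (Equiv.swap 0 2))
  have hmem {u} : u ∈ legLevel α 0 ∪ legLevel α 2 ↔
      (∃ a, u = Sum.inr (a, 0)) ∨ ∃ a, u = Sum.inr (a, 2) := by
    rw [mem_union, mem_legLevel, mem_legLevel]
  have hx a : (GP4 H).Adj (Sum.inr (a, 0)) (Sum.inr (a, 1)) := adj_inr_of_val_eq_succ H a rfl
  have hy a : (GP4 H).Adj (Sum.inr (a, 1)) (Sum.inr (a, 2)) := adj_inr_of_val_eq_succ H a rfl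
  refine ⟨dominating_legLevel_zero_union_two H, σ, fun u hu => ?_, fun u _ => ?_,
    fun u hu => ?_, fun u hu => ?_⟩
  · rcases hmem.1 hu with ⟨a, rfl⟩ | ⟨a, rfl⟩
    exacts [hmem.2 (Or.inr ⟨a, rfl⟩), hmem.2 (Or.inl ⟨a, rfl⟩)]
  · rcases u with a | ⟨a, j⟩ <;> simp [σ]
  · rcases hmem.1 hu with ⟨a, rfl⟩ | ⟨a, rfl⟩ <;> simp [σ]
  · rcases hmem.1 hu with ⟨a, rfl⟩ | ⟨a, rfl⟩
    exacts [Or.inr ⟨_, hx a, hy a⟩, Or.inr ⟨_, (hy a).symm, (hx a).symm⟩]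

end GP4

theorem gp4_semiPairedDomNum_le_general {α : Type*} [Fintype α] [DecidableEq α]
    (H : SimpleGraph α) :
    SemiPairedDom (GP4 H)
      ((Finset.univ.image fun a : α => (Sum.inr (a, 0) : α ⊕ α × Fin 4)) ∪
        (Finset.univ.image fun a : α => (Sum.inr (a, 2) : α ⊕ α × Fin 4))) ∧
    ((Finset.univ.image fun a : α => (Sum.inr (a, 0) : α ⊕ α × Fin 4)) ∪
        (Finset.univ.image fun a : α => (Sum.inr (a, 2) : α ⊕ α × Fin 4))).card
      = 2 * Fintype.card α ∧
    semiPairedDomNum (α ⊕ α × Fin 4) (GP4 H) ≤ 2 * Fintype.card α := by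
  have hS := GP4.semiPairedDom_legLevel_zero_union_two H
  have hcard : (GP4.legLevel α 0 ∪ GP4.legLevel α 2).card = 2 * Fintype.card α :=
    GP4.card_legLevel_union (by decide)
  exact ⟨hS, hcard, hcard ▸ semiPairedDomNum_le_card hS⟩

/-- The set `S = {w_i, y_i}` is a semipaired dominating set of the GP4-graph
of size `2n`; hence `γ_{pr2}(G) ≤ (2/5)|V(G)| = 2n`. -/
theorem gp4_semiPairedDomNum_le {α : Type*} [Fintype α] [DecidableEq α]
    (H : SimpleGraph α) (hH : H.Connected) :
    SemiPairedDom (GP4 H)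
      ((Finset.univ.image fun a : α => (Sum.inr (a, 0) : α ⊕ α × Fin 4)) ∪
        (Finset.univ.image fun a : α => (Sum.inr (a, 2) : α ⊕ α × Fin 4))) ∧
    ((Finset.univ.image fun a : α => (Sum.inr (a, 0) : α ⊕ α × Fin 4)) ∪
        (Finset.univ.image fun a : α => (Sum.inr (a, 2) : α ⊕ α × Fin 4))).card
      = 2 * Fintype.card α ∧
    semiPairedDomNum (α ⊕ α × Fin 4) (GP4 H) ≤ 2 * Fintype.card α :=
  gp4_semiPairedDomNum_le_general H
end

section
/- Let G be a GP4-graph constructed from a connected graph H with n vertices. Every semipaired dominating set of G contains at least two vertices from {w_i, x_i, y_i, z_i} for each i ∈ {1,...,n}; consequently every semipaired dominating set of G has size at least 2n. -/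
open SimpleGraph Finset

/-
The vertex of `D` dominating `z_a` is `y_a` or `z_a`, and every vertex within
distance two of `y_a` or `z_a` still lies on the pendant path of `a`; so its partner is a second
vertex of `D` on that path. The pendant paths are disjoint, which gives `|D| ≥ 2n`.
-/

namespace GP4

variable {α : Type*} (H : SimpleGraph α)

lemma exists_eq_inr_of_adj {a : α} {j : Fin 4} (hj : 1 ≤ (j : ℕ)) {v : α ⊕ α × Fin 4}
    (h : (GP4 H).Adj (Sum.inr (a, j)) v) :
    ∃ k : Fin 4, v = Sum.inr (a, k) ∧ ((k : ℕ) + 1 = j ∨ (k : ℕ) = (j : ℕ) + 1) := by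
  rw [GP4, fromRel_adj] at h
  obtain ⟨-, h | h⟩ := h <;>
    rcases h with ⟨a', b', h1, h2, -⟩ | ⟨a', h1, h2⟩ | ⟨a', j', k', h1, h2, h3⟩ <;>
    simp_all

lemma exists_eq_inr_of_dist_le_two {a : α} {j : Fin 4} (hj : 2 ≤ (j : ℕ))
    {v : α ⊕ α × Fin 4}
    (h : (GP4 H).Adj (Sum.inr (a, j)) v ∨ ∃ w, (GP4 H).Adj (Sum.inr (a, j)) w ∧ (GP4 H).Adj w v) :
    ∃ k : Fin 4, v = Sum.inr (a, k) := by
  rcases h with hadj | ⟨w, hw, hwv⟩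
  · obtain ⟨k, hk, -⟩ := exists_eq_inr_of_adj H (by omega) hadj
    exact ⟨k, hk⟩
  · obtain ⟨i, rfl, hi⟩ := exists_eq_inr_of_adj H (by omega) hw
    obtain ⟨k, hk, -⟩ := exists_eq_inr_of_adj H (by omega) hwv
    exact ⟨k, hk⟩

lemma exists_inr_mem_of_dominating {D : Finset (α ⊕ α × Fin 4)} (hD : Dominating (GP4 H) D)
    (a : α) : ∃ j : Fin 4, 2 ≤ (j : ℕ) ∧ Sum.inr (a, j) ∈ D := by
  obtain ⟨u, huD, rfl | hadj⟩ := hD (Sum.inr (a, 3))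
  · exact ⟨3, by decide, huD⟩
  · obtain ⟨k, rfl, hk⟩ := exists_eq_inr_of_adj H (j := 3) (by decide) hadj.symm
    exact ⟨k, by omega, huD⟩

lemma two_le_card_filter_inr [DecidableEq α] {D : Finset (α ⊕ α × Fin 4)}
    (hD : SemiPairedDom (GP4 H) D) (a : α) : 2 ≤ (D.filter fun v => ∃ k : Fin 4, v = Sum.inr (a, k)).card := by
  obtain ⟨hdom, f, hfD, -, hfne, hfdist⟩ := hD
  obtain ⟨j, hj, hjD⟩ := exists_inr_mem_of_dominating H hdom a
  obtain ⟨k, hk⟩ := exists_eq_inr_of_dist_le_two H hj (hfdist _ hjD)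
  have hjk : (Sum.inr (a, j) : α ⊕ α × Fin 4) ≠ Sum.inr (a, k) :=
    fun h => hfne _ hjD (hk.trans h.symm)
  have hsub : {Sum.inr (a, j), Sum.inr (a, k)} ⊆
      D.filter fun v => ∃ k : Fin 4, v = Sum.inr (a, k) := by
    intro v hv
    rcases mem_insert.1 hv with rfl | hv
    · exact mem_filter.2 ⟨hjD, j, rfl⟩
    · rw [mem_singleton.1 hv]
      exact mem_filter.2 ⟨hk ▸ hfD _ hjD, k, rfl⟩
  simpa [card_pair hjk] using card_le_card hsub

end GP4

lemma sum_card_filter_inr_le {α : Type*} [Fintype α] [DecidableEq α] {n : ℕ}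
    (D : Finset (α ⊕ α × Fin n)) :
    ∑ a : α, (D.filter fun v => ∃ k : Fin n, v = Sum.inr (a, k)).card ≤ D.card := by
  have hdisj : ((univ : Finset α) : Set α).PairwiseDisjoint
      fun a => D.filter fun v => ∃ k : Fin n, v = Sum.inr (a, k) := by
    intro a _ b _ hab
    refine disjoint_left.2 fun v hva hvb => hab ?_
    obtain ⟨-, k, rfl⟩ := mem_filter.1 hva
    obtain ⟨-, l, h⟩ := mem_filter.1 hvb
    exact (Prod.ext_iff.1 (Sum.inr_injective h)).1
  rw [← card_biUnion hdisj]
  exact card_le_card (biUnion_subset.2 fun a _ => filter_subset _ _)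

open scoped Classical in
theorem gp4_semiPairedDom_lower_general {α : Type*} [Fintype α] [DecidableEq α]
    (H : SimpleGraph α)
    (D : Finset (α ⊕ α × Fin 4)) (hD : SemiPairedDom (GP4 H) D) :
    (∀ a : α, 2 ≤ (D.filter fun v => ∃ k : Fin 4, v = Sum.inr (a, k)).card) ∧
    2 * Fintype.card α ≤ D.card := by
  refine ⟨GP4.two_le_card_filter_inr H hD, ?_⟩
  calc 2 * Fintype.card α = ∑ _a : α, 2 := by simp [mul_comm]
    _ ≤ ∑ a : α, (D.filter fun v => ∃ k : Fin 4, v = Sum.inr (a, k)).card :=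
        sum_le_sum fun a _ => GP4.two_le_card_filter_inr H hD a
    _ ≤ D.card := sum_card_filter_inr_le D

open scoped Classical in
/-- Every semipaired dominating set of the GP4-graph contains at least two
vertices from `{w_i, x_i, y_i, z_i}` for each vertex `i` of `H`; consequently it has
size at least `2n`. -/
theorem gp4_semiPairedDom_lower {α : Type*} [Fintype α] [DecidableEq α]
    (H : SimpleGraph α) (hH : H.Connected)
    (D : Finset (α ⊕ α × Fin 4)) (hD : SemiPairedDom (GP4 H) D) :
    (∀ a : α, 2 ≤ (D.filter fun v => ∃ k : Fin 4, v = Sum.inr (a, k)).card) ∧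
    2 * Fintype.card α ≤ D.card :=
  gp4_semiPairedDom_lower_general H D hD
end

section
/- If D = {v_{i_1},...,v_{i_k}} is a dominating set of G, then D' = {v_{i_1}^1,...,v_{i_k}^1} ∪ {u_{i_1}^1,...,u_{i_k}^1} is a semipaired dominating set of the split graph G' (constructed as in the split graph reduction) of cardinality at most 2k. -/
open SimpleGraph Finset

/-- The split graph `G'` built from `G`: vertices `Sum.inl (Sum.inl i)` are `v_i^1`,
`Sum.inl (Sum.inr i)` are `u_i^1` (together a clique), `Sum.inr (Sum.inl i)` are `v_i^2`
and `Sum.inr (Sum.inr i)` are `u_i^2` (an independent set), with `v_i^2 v_j^1` and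
`u_i^2 u_j^1` edges exactly when `v_j ∈ N_G[v_i]`. -/
def splitG {α : Type*} (G : SimpleGraph α) : SimpleGraph ((α ⊕ α) ⊕ (α ⊕ α)) :=
  SimpleGraph.fromRel (fun u v =>
    (∃ x y : α ⊕ α, u = Sum.inl x ∧ v = Sum.inl y) ∨
    (∃ i j : α, u = Sum.inr (Sum.inl i) ∧ v = Sum.inl (Sum.inl j) ∧ (i = j ∨ G.Adj i j)) ∨
    (∃ i j : α, u = Sum.inr (Sum.inr i) ∧ v = Sum.inl (Sum.inr j) ∧ (i = j ∨ G.Adj i j)))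

/-! `D'` is even a paired dominating set: `v_i^1` and `u_i^1` are adjacent in the clique, every
clique vertex is dominated by any vertex of `D'`, and if `v_j ∈ D` dominates `v_i` in `G` then
`v_j^1` dominates `v_i^2` and `u_j^1` dominates `u_i^2`. -/

theorem PairedDom.semiPairedDom {V : Type*} {G : SimpleGraph V} {D : Finset V}
    (h : PairedDom G D) : SemiPairedDom G D := by
  obtain ⟨hdom, f, hmem, hinv, hne, hadj⟩ := h
  exact ⟨hdom, f, hmem, hinv, hne, fun u hu => Or.inl (hadj u hu)⟩

section SplitGraph

variable {α : Type*} {G : SimpleGraph α}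

theorem splitG_adj_inl_inl {x y : α ⊕ α} :
    (splitG G).Adj (.inl x) (.inl y) ↔ x ≠ y := by
  rw [splitG, fromRel_adj]
  exact ⟨fun h hxy => h.1 (hxy ▸ rfl),
    fun h => ⟨by simpa using h, Or.inl (Or.inl ⟨x, y, rfl, rfl⟩)⟩⟩

theorem splitG_adj_inl_inl_inr_inl {i j : α} :
    (splitG G).Adj (.inl (.inl j)) (.inr (.inl i)) ↔ j = i ∨ G.Adj j i := by
  simpa [splitG] using or_congr eq_comm (G.adj_comm _ _)

theorem splitG_adj_inl_inr_inr_inr {i j : α} :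
    (splitG G).Adj (.inl (.inr j)) (.inr (.inr i)) ↔ j = i ∨ G.Adj j i := by
  simpa [splitG] using or_congr eq_comm (G.adj_comm _ _)

variable [DecidableEq α]

/-- The set `D'` of the split graph reduction. -/
def splitLift (D : Finset α) : Finset ((α ⊕ α) ⊕ (α ⊕ α)) :=
  D.image (fun i => .inl (.inl i)) ∪ D.image (fun i => .inl (.inr i))

theorem mem_splitLift {D : Finset α} {z : (α ⊕ α) ⊕ (α ⊕ α)} :
    z ∈ splitLift D ↔ ∃ i ∈ D, z = .inl (.inl i) ∨ z = .inl (.inr i) := by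
  simp only [splitLift, mem_union, mem_image, eq_comm, ← exists_or, and_or_left]

theorem card_splitLift_le (D : Finset α) : (splitLift D).card ≤ 2 * D.card :=
  calc (splitLift D).card
      ≤ (D.image fun _ => _).card + (D.image fun _ => _).card := card_union_le _ _
    _ ≤ D.card + D.card := add_le_add card_image_le card_image_le
    _ = 2 * D.card := (two_mul _).symm

theorem Dominating.dominating_splitLift {D : Finset α} (hD : Dominating G D) :
    Dominating (splitG G) (splitLift D) := by
  rintro ((i | i) | (i | i)) <;> obtain ⟨u, hu, hui⟩ := hD i
  · exact ⟨.inl (.inl u), mem_splitLift.2 ⟨u, hu, Or.inl rfl⟩,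
      (eq_or_ne (Sum.inl u : α ⊕ α) (Sum.inl i)).imp (congrArg _) splitG_adj_inl_inl.2⟩
  · exact ⟨.inl (.inr u), mem_splitLift.2 ⟨u, hu, Or.inr rfl⟩,
      (eq_or_ne (Sum.inr u : α ⊕ α) (Sum.inr i)).imp (congrArg _) splitG_adj_inl_inl.2⟩
  · exact ⟨.inl (.inl u), mem_splitLift.2 ⟨u, hu, Or.inl rfl⟩,
      Or.inr (splitG_adj_inl_inl_inr_inl.2 hui)⟩
  · exact ⟨.inl (.inr u), mem_splitLift.2 ⟨u, hu, Or.inr rfl⟩,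
      Or.inr (splitG_adj_inl_inr_inr_inr.2 hui)⟩

theorem Dominating.pairedDom_splitLift {D : Finset α} (hD : Dominating G D) :
    PairedDom (splitG G) (splitLift D) := by
  refine ⟨hD.dominating_splitLift, Sum.map Sum.swap id, ?_, ?_, ?_, ?_⟩ <;>
    intro z hz <;> obtain ⟨i, hi, rfl | rfl⟩ := mem_splitLift.1 hz
  all_goals simp [mem_splitLift, splitG_adj_inl_inl, hi]

end SplitGraph

theorem splitG_semiPairedDom_of_dom_general {α : Type*} [DecidableEq α]
    (G : SimpleGraph α) (D : Finset α) (hD : Dominating G D) :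
    SemiPairedDom (splitG G)
      ((D.image fun i => (Sum.inl (Sum.inl i) : (α ⊕ α) ⊕ (α ⊕ α))) ∪
        (D.image fun i => (Sum.inl (Sum.inr i) : (α ⊕ α) ⊕ (α ⊕ α)))) ∧
    ((D.image fun i => (Sum.inl (Sum.inl i) : (α ⊕ α) ⊕ (α ⊕ α))) ∪
        (D.image fun i => (Sum.inl (Sum.inr i) : (α ⊕ α) ⊕ (α ⊕ α)))).card
      ≤ 2 * D.card :=
  ⟨hD.pairedDom_splitLift.semiPairedDom, card_splitLift_le D⟩

/-- If `D` is a dominating set of `G`, then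
`D' = {v_i^1 : v_i ∈ D} ∪ {u_i^1 : v_i ∈ D}` is a semipaired dominating set of the split
graph `G'` of cardinality at most `2|D|`. -/
theorem splitG_semiPairedDom_of_dom {α : Type*} [Fintype α] [DecidableEq α]
    (G : SimpleGraph α) (D : Finset α) (hD : Dominating G D) :
    SemiPairedDom (splitG G)
      ((D.image fun i => (Sum.inl (Sum.inl i) : (α ⊕ α) ⊕ (α ⊕ α))) ∪
        (D.image fun i => (Sum.inl (Sum.inr i) : (α ⊕ α) ⊕ (α ⊕ α)))) ∧
    ((D.image fun i => (Sum.inl (Sum.inl i) : (α ⊕ α) ⊕ (α ⊕ α))) ∪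
        (D.image fun i => (Sum.inl (Sum.inr i) : (α ⊕ α) ⊕ (α ⊕ α)))).card
      ≤ 2 * D.card :=
  splitG_semiPairedDom_of_dom_general G D hD
end
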